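/- Let φ ∈ Φ and let E ⊆ 𝕋 be an open subset of the circle written as an at most countable union of pairwise disjoint open arcs with lengths (l_k). If Σ_k l_k·φ(l_k) ≤ M, then there exists a constant A > 0, depending only on M and φ, such that τ(h,E) ≤ A/φ(h) for all h ∈ (0,1]. -/

import Mathlib

/-!
Translating an open arc of length `l` by `h` changes its indicator function on a set of measure
at most `2 min(l, h)`, so by subadditivity `τ(h, E) ≤ 2 Σ_k min(l_k, h)`. The conditions defining
`Φ` make `t ↦ t φ(t)` almost increasing on `(0, 1]`, which gives `min(l, h) φ(h) ≤ K l φ(l)` for a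
constant `K` depending only on `φ`, and hence `τ(h, E) ≤ 2 K M / φ(h)`.
-/

open MeasureTheory Set

/-- The `L^p` modulus of continuity `ω(f,t)_p` on the circle `𝕋 = ℝ/ℤ`. -/
noncomputable def modulus (f : AddCircle (1:ℝ) → ℝ) (p t : ℝ) : ℝ :=
  ⨆ h : {h : ℝ // |h| ≤ t},
    (∫ x : AddCircle (1:ℝ), |f (x + ((h.1 : ℝ) : AddCircle (1:ℝ))) - f x| ^ p) ^ (1/p)

/-- `τ(h,E)`: the measure of the set where the characteristic function of `E`
translated by `h` differs from itself. -/
noncomputable def tau (h : ℝ) (E : Set (AddCircle (1:ℝ))) : ℝ :=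
  (volume {x : AddCircle (1:ℝ) |
    E.indicator (fun _ => (1:ℝ)) (x + ((h : ℝ) : AddCircle (1:ℝ)))
      ≠ E.indicator (fun _ => (1:ℝ)) x}).toReal

/-- The open arc of the circle which is the image of the interval `(a, a+l)`. -/
noncomputable def arc (a l : ℝ) : Set (AddCircle (1:ℝ)) :=
  (fun r : ℝ => (r : AddCircle (1:ℝ))) '' Set.Ioo a (a + l)

/-- The class `Φ`: `φ` is positive and non-increasing on `(0,1]`, and `t ↦ t·φ(t)` is
non-decreasing, concave and bounded on some interval `(0,1/c)` with `c > 1`. -/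
def IsPhiClass (φ : ℝ → ℝ) : Prop :=
  (∀ t ∈ Set.Ioc (0:ℝ) 1, 0 < φ t) ∧
  AntitoneOn φ (Set.Ioc 0 1) ∧
  ∃ c > (1:ℝ), MonotoneOn (fun t => t * φ t) (Set.Ioo 0 (1/c)) ∧
    ConcaveOn ℝ (Set.Ioo 0 (1/c)) (fun t => t * φ t) ∧
    BddAbove ((fun t => t * φ t) '' Set.Ioo 0 (1/c))

open scoped symmDiff

theorem setOf_indicator_apply_ne_eq_symmDiff {α β : Type*} [Zero β] {c : β} (hc : c ≠ 0)
    (f : α → α) (s : Set α) :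
    {x | s.indicator (fun _ => c) (f x) ≠ s.indicator (fun _ => c) x} = (f ⁻¹' s) ∆ s := by
  ext x
  by_cases hfx : f x ∈ s <;> by_cases hx : x ∈ s <;> simp [hfx, hx, hc, eq_comm, Set.mem_symmDiff]

theorem preimage_iUnion_symmDiff_subset {α ι : Type*} (f : α → α) (s : ι → Set α) :
    (f ⁻¹' ⋃ i, s i) ∆ (⋃ i, s i) ⊆ ⋃ i, (f ⁻¹' s i) ∆ s i := by
  rw [preimage_iUnion]
  exact iUnion_symmDiff_iUnion_subset

theorem Real.volume_Ioo_diff_Ioo_le (b c l : ℝ) :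
    volume (Ioo b (b + l) \ Ioo c (c + l)) ≤ ENNReal.ofReal (min l (|b - c|)) := by
  rcases le_total b c with hbc | hcb
  · calc volume (Ioo b (b + l) \ Ioo c (c + l))
        ≤ volume (Ioc b (min c (b + l))) := by
          refine measure_mono fun x ⟨⟨hbx, hxl⟩, hx⟩ => ⟨hbx, le_min ?_ hxl.le⟩
          by_contra! hcx
          exact hx ⟨hcx, by linarith⟩
      _ = ENNReal.ofReal (min l (|b - c|)) := by
          rw [Real.volume_Ioc, abs_of_nonpos (by linarith), ← min_sub_sub_right, min_comm]
          ring_nf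
  · calc volume (Ioo b (b + l) \ Ioo c (c + l))
        ≤ volume (Ico (max b (c + l)) (b + l)) := by
          refine measure_mono fun x ⟨⟨hbx, hxl⟩, hx⟩ => ⟨max_le hbx.le ?_, hxl⟩
          by_contra! hxc
          exact hx ⟨by linarith, hxc⟩
      _ = ENNReal.ofReal (min l (|b - c|)) := by
          rw [Real.volume_Ico, abs_of_nonneg (by linarith), ← min_sub_sub_left]
          ring_nf

theorem AddCircle.volume_coe_image_of_subset_Ioc {T : ℝ} [Fact (0 < T)] {s : Set ℝ} {a : ℝ}
    (hs : s ⊆ Ioc a (a + T)) :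
    volume (((↑) : ℝ → AddCircle T) '' s) = volume s := by
  have himage : ((↑) : ℝ → AddCircle T) '' s =
      measurableEquivIoc T a ⁻¹' (Subtype.val ⁻¹' s) := by
    ext x
    constructor
    · rintro ⟨r, hr, rfl⟩
      change (equivIoc T a r : ℝ) ∈ s
      rwa [equivIoc_coe_eq (hs hr)]
    · intro hx
      exact ⟨_, hx, coe_equivIoc⟩
  rw [himage, (measurePreserving_equivIoc T (a := a)).measure_preimage_equiv,
    comap_subtype_coe_apply measurableSet_Ioc, Subtype.image_preimage_coe,
    inter_eq_right.mpr hs]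

theorem volume_arc_diff_arc_le (b c : ℝ) {l : ℝ} (hl : l ≤ 1) :
    volume (arc b l \ arc c l) ≤ ENNReal.ofReal (min l (|b - c|)) :=
  calc volume (arc b l \ arc c l)
      ≤ volume (((↑) : ℝ → AddCircle (1:ℝ)) '' (Ioo b (b + l) \ Ioo c (c + l))) :=
        measure_mono fun _ ⟨⟨r, hr, hrx⟩, hx⟩ => ⟨r, ⟨hr, fun hr' => hx ⟨r, hr', hrx⟩⟩, hrx⟩
    _ = volume (Ioo b (b + l) \ Ioo c (c + l)) :=
        AddCircle.volume_coe_image_of_subset_Ioc fun _ hx =>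
          ⟨hx.1.1, by linarith [hx.1.2]⟩
    _ ≤ ENNReal.ofReal (min l (|b - c|)) := Real.volume_Ioo_diff_Ioo_le b c l

theorem preimage_add_coe_arc (a l h : ℝ) :
    (· + (h : AddCircle (1:ℝ))) ⁻¹' arc a l = arc (a - h) l := by
  ext x
  constructor
  · rintro ⟨r, hr, hrx⟩
    refine ⟨r - h, ⟨by linarith [hr.1], by linarith [hr.2]⟩, ?_⟩
    simp only [AddCircle.coe_sub] at hrx ⊢
    rw [hrx, add_sub_cancel_right]
  · rintro ⟨s, hs, rfl⟩
    exact ⟨s + h, ⟨by linarith [hs.1], by linarith [hs.2]⟩,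
      (AddCircle.coe_add (p := (1:ℝ)) s h).symm⟩

theorem volume_preimage_add_coe_arc_symmDiff_le (a h : ℝ) {l : ℝ} (hl : l ≤ 1) :
    volume (((· + (h : AddCircle (1:ℝ))) ⁻¹' arc a l) ∆ arc a l) ≤
      2 * ENNReal.ofReal (min l (|h|)) := by
  rw [preimage_add_coe_arc, Set.symmDiff_def]
  calc volume (arc (a - h) l \ arc a l ∪ arc a l \ arc (a - h) l)
      ≤ volume (arc (a - h) l \ arc a l) + volume (arc a l \ arc (a - h) l) :=
        measure_union_le _ _
    _ ≤ ENNReal.ofReal (min l (|h|)) + ENNReal.ofReal (min l (|h|)) := by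
        gcongr
        · simpa using volume_arc_diff_arc_le (a - h) a hl
        · simpa using volume_arc_diff_arc_le a (a - h) hl
    _ = 2 * ENNReal.ofReal (min l (|h|)) := (two_mul _).symm

theorem tau_eq_toReal_volume_symmDiff (h : ℝ) (E : Set (AddCircle (1:ℝ))) :
    tau h E = (volume (((· + (h : AddCircle (1:ℝ))) ⁻¹' E) ∆ E)).toReal := by
  rw [tau, setOf_indicator_apply_ne_eq_symmDiff one_ne_zero]

namespace IsPhiClass

variable {φ : ℝ → ℝ}

theorem bddAbove_mul_image_Ioc (hφ : IsPhiClass φ) :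
    BddAbove ((fun t => t * φ t) '' Ioc 0 1) := by
  obtain ⟨hpos, hanti, c, hc, -, -, B, hB⟩ := hφ
  have hc' : 1 / c ∈ Ioc (0:ℝ) 1 := ⟨by positivity, (div_lt_one (by linarith)).2 hc |>.le⟩
  refine ⟨max B (φ (1 / c)), ?_⟩
  rintro _ ⟨t, ht, rfl⟩
  rcases lt_or_ge t (1 / c) with htc | htc
  · exact le_max_of_le_left (hB ⟨t, ⟨ht.1, htc⟩, rfl⟩)
  · calc t * φ t ≤ φ t := mul_le_of_le_one_left (hpos t ht).le ht.2
      _ ≤ φ (1 / c) := hanti hc' ht htc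
      _ ≤ _ := le_max_right _ _

theorem exists_mul_le_mul (hφ : IsPhiClass φ) :
    ∃ K ≥ 1, ∀ t ∈ Ioc (0:ℝ) 1, ∀ s ∈ Ioc (0:ℝ) 1, t ≤ s → t * φ t ≤ K * (s * φ s) := by
  obtain ⟨B, hB⟩ := hφ.bddAbove_mul_image_Ioc
  obtain ⟨hpos, hanti, c, hc, hmono, -, -⟩ := hφ
  have hc0 : 0 < c := by linarith
  have hφ1 : 0 < φ 1 := hpos 1 ⟨one_pos, le_rfl⟩
  refine ⟨max 1 (B * c / φ 1), le_max_left _ _, fun t ht s hs hts => ?_⟩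
  have hK : 0 ≤ max 1 (B * c / φ 1) := zero_le_one.trans (le_max_left _ _)
  rcases lt_or_ge s (1 / c) with hsc | hsc
  · calc t * φ t ≤ s * φ s := hmono ⟨ht.1, hts.trans_lt hsc⟩ ⟨hs.1, hsc⟩ hts
      _ ≤ _ := le_mul_of_one_le_left (mul_pos hs.1 (hpos s hs)).le (le_max_left _ _)
  · have hlow : φ 1 / c ≤ s * φ s := by
      rw [div_eq_inv_mul, ← one_div]
      exact mul_le_mul hsc (hanti hs ⟨one_pos, le_rfl⟩ hs.2) hφ1.le hs.1.le
    calc t * φ t ≤ B := hB ⟨t, ht, rfl⟩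
      _ = B * c / φ 1 * (φ 1 / c) := by field_simp
      _ ≤ _ := mul_le_mul (le_max_right _ _) hlow (div_nonneg hφ1.le hc0.le) hK

theorem exists_min_mul_le (hφ : IsPhiClass φ) :
    ∃ K > 0, ∀ l ∈ Ioc (0:ℝ) 1, ∀ h ∈ Ioc (0:ℝ) 1, min l h * φ h ≤ K * (l * φ l) := by
  obtain ⟨K, hK1, hK⟩ := hφ.exists_mul_le_mul
  refine ⟨K, by linarith, fun l hl h hh => ?_⟩
  rcases le_total l h with hlh | hhl
  · rw [min_eq_left hlh]
    calc l * φ h ≤ l * φ l := mul_le_mul_of_nonneg_left (hφ.2.1 hl hh hlh) hl.1.le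
      _ ≤ K * (l * φ l) := le_mul_of_one_le_left (mul_pos hl.1 (hφ.1 l hl)).le hK1
  · rw [min_eq_right hhl]
    exact hK h hh l hl hhl

end IsPhiClass

/-- Let `φ ∈ Φ` and `M` be given. There is a constant `A > 0`, depending
only on `M` and `φ`, such that whenever an open `E ⊆ 𝕋` is an at most countable union of
pairwise disjoint open arcs of lengths `l k` with `Σ_k l_k φ(l_k) ≤ M`, one has
`τ(h,E) ≤ A/φ(h)` for all `h ∈ (0,1]`. -/
theorem stmt_10 (φ : ℝ → ℝ) (hφ : IsPhiClass φ) (M : ℝ) :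
    ∃ A > 0, ∀ (ι : Type) (_ : Countable ι) (a l : ι → ℝ) (E : Set (AddCircle (1:ℝ))),
      E = (⋃ k, arc (a k) (l k)) →
      Pairwise (Function.onFun Disjoint (fun k => arc (a k) (l k))) →
      (∀ k, l k ∈ Set.Ioc (0:ℝ) 1) →
      (∑' k, ENNReal.ofReal (l k * φ (l k))) ≤ ENNReal.ofReal M →
      ∀ h ∈ Set.Ioc (0:ℝ) 1, tau h E ≤ A / φ h := by
  obtain ⟨K, hK, hKφ⟩ := hφ.exists_min_mul_le
  refine ⟨2 * K * max M 1, by positivity, ?_⟩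
  rintro ι _ a l E rfl - hl hsum h hh
  have hφh : 0 < φ h := hφ.1 h hh
  have hC : 0 ≤ 2 * K / φ h := by positivity
  have harc (k : ι) :
      volume (((· + (h : AddCircle (1:ℝ))) ⁻¹' arc (a k) (l k)) ∆ arc (a k) (l k)) ≤
        ENNReal.ofReal (2 * K / φ h) * ENNReal.ofReal (l k * φ (l k)) :=
    calc _ ≤ 2 * ENNReal.ofReal (min (l k) (|h|)) :=
          volume_preimage_add_coe_arc_symmDiff_le _ _ (hl k).2
      _ = ENNReal.ofReal (2 * min (l k) h) := by
          rw [abs_of_pos hh.1, ENNReal.ofReal_mul zero_le_two, ENNReal.ofReal_ofNat]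
      _ ≤ ENNReal.ofReal (2 * K / φ h * (l k * φ (l k))) := by
          refine ENNReal.ofReal_le_ofReal ?_
          rw [div_mul_eq_mul_div, le_div_iff₀ hφh]
          nlinarith [hKφ _ (hl k) h hh]
      _ = _ := ENNReal.ofReal_mul hC
  rw [tau_eq_toReal_volume_symmDiff]
  refine ENNReal.toReal_le_of_le_ofReal (by positivity) ?_
  calc _ ≤ ∑' k, volume (((· + (h : AddCircle (1:ℝ))) ⁻¹' arc (a k) (l k)) ∆ arc (a k) (l k)) :=
        (measure_mono (preimage_iUnion_symmDiff_subset _ _)).trans (measure_iUnion_le _)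
    _ ≤ ∑' k, ENNReal.ofReal (2 * K / φ h) * ENNReal.ofReal (l k * φ (l k)) :=
        ENNReal.tsum_le_tsum harc
    _ = ENNReal.ofReal (2 * K / φ h) * ∑' k, ENNReal.ofReal (l k * φ (l k)) :=
        ENNReal.tsum_mul_left
    _ ≤ ENNReal.ofReal (2 * K / φ h) * ENNReal.ofReal (max M 1) := by
        gcongr
        exact hsum.trans (ENNReal.ofReal_le_ofReal (le_max_left _ _))
    _ = ENNReal.ofReal (2 * K * max M 1 / φ h) := by
        rw [← ENNReal.ofReal_mul hC]
        ring_nf
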